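/- Let X be a Banach space, 1 ≤ p ≤ ∞ with conjugate exponent p', and let 0 < q < p'. Let ρ = (ρ_j)_{j≥1} be a sequence with ρ_j > 1 for all j and (ρ_j^{-1})_{j≥1} ∈ ℓ_q(ℕ). Let (t_ν)_{ν∈F} be a family in X with M := ‖(ρ^ν ‖t_ν‖_X)_{ν∈F}‖_{ℓ_p(F)} < ∞, and suppose the series u(y) = Σ_{ν∈F} t_ν y^ν converges absolutely in X for every y ∈ Y. Then for every integer m ≥ 0 there exists a lower set Λ ⊆ F with #Λ = m+1 such that the polynomial P(y) := Σ_{ν∈Λ} t_ν y^ν satisfies sup_{y∈Y} ‖u(y) − P(y)‖_X ≤ M · ‖(ρ^{−ν})_{ν∈F\{0}}‖_{ℓ_q} · (m+1)^{−r}, where r := −1 + 1/p + 1/q > 0. -/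

import Mathlib

open scoped BigOperators ENNReal

noncomputable section

/-- The set `F` of finitely supported multi-indices. -/
abbrev MIdx : Type := ℕ →₀ ℕ

/-- `ρ^ν := ∏_j ρ_j^{ν_j}` for a finitely supported multi-index `ν`. -/
def mpow (ρ : ℕ → ℝ) (ν : MIdx) : ℝ := ν.prod fun j k => ρ j ^ k

/-- The `ℓ_p(F)` norm (`p ∈ [1,∞]`, valued in `ℝ≥0∞`) of a family of nonnegative reals. -/
def lpF (p : ℝ≥0∞) (a : MIdx → ℝ) : ℝ≥0∞ :=
  if p = ∞ then ⨆ ν, ENNReal.ofReal (a ν)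
  else (∑' ν, ENNReal.ofReal (a ν) ^ p.toReal) ^ (1 / p.toReal)

/-!
Order the multi-indices by the weights `ρ^{-ν}` and let `Λ` consist of `m + 1` indices of largest
weight; since `ρ^{-ν}` strictly decreases along the coordinatewise order, a greedy choice keeps
`Λ` lower. The error is bounded by `∑_{ν ∉ Λ} (ρ^ν ‖t_ν‖) ρ^{-ν}`, hence by Hölder by `M` times the
`ℓ_{p'}` norm of the tail weights. Every tail weight `w` is dominated by the `m + 1` nonzero
weights in `Λ ∪ {w}`, so `(m + 1) w^q ≤ ‖ρ^{-ν}‖_{ℓ_q}^q`, and Stechkin's interpolation between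
this uniform bound and the `ℓ_q` bound gives the `ℓ_{p'}` norm of the tail as at most
`‖(ρ^{-ν})_{ν ≠ 0}‖_{ℓ_q} (m + 1)^{-r}`.
-/

lemma mpow_add (ρ : ℕ → ℝ) (μ ν : MIdx) : mpow ρ (μ + ν) = mpow ρ μ * mpow ρ ν :=
  Finsupp.prod_add_index' (fun _ => pow_zero _) (fun _ => pow_add _)

lemma mpow_pos {ρ : ℕ → ℝ} (hρ : ∀ j, 0 < ρ j) (ν : MIdx) : 0 < mpow ρ ν :=
  Finset.prod_pos fun j _ => pow_pos (hρ j) _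

lemma one_lt_mpow {ρ : ℕ → ℝ} (hρ : ∀ j, 1 < ρ j) {ν : MIdx} (hν : ν ≠ 0) : 1 < mpow ρ ν := by
  have := Finset.prod_lt_prod_of_nonempty (f := fun _ => (1 : ℝ)) (g := fun j => ρ j ^ ν j)
    (fun _ _ => zero_lt_one) (fun j hj => one_lt_pow₀ (hρ j) (Finsupp.mem_support_iff.mp hj))
    (Finsupp.support_nonempty_iff.mpr hν)
  simpa [mpow, Finsupp.prod] using this

lemma strictMono_mpow {ρ : ℕ → ℝ} (hρ : ∀ j, 1 < ρ j) : StrictMono (mpow ρ) := by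
  intro μ ν hμν
  rw [← add_tsub_cancel_of_le hμν.le, mpow_add]
  exact lt_mul_of_one_lt_right (mpow_pos (fun j => one_pos.trans (hρ j)) μ)
    (one_lt_mpow hρ (tsub_pos_of_lt hμν).ne')

lemma norm_mpow_le_one {y : ℕ → ℝ} (hy : ∀ j, |y j| ≤ 1) (ν : MIdx) : ‖mpow y ν‖ ≤ 1 := by
  rw [Real.norm_eq_abs, mpow, Finsupp.prod, Finset.abs_prod]
  exact Finset.prod_le_one (fun _ _ => abs_nonneg _) fun j _ => by
    rw [abs_pow]; exact pow_le_one₀ (abs_nonneg _) (hy j)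

lemma enorm_mpow_smul_le {X : Type*} [NormedAddCommGroup X] [NormedSpace ℝ X] {ρ y : ℕ → ℝ}
    (hρ : ∀ j, 0 < ρ j) (hy : ∀ j, |y j| ≤ 1) (ν : MIdx) (x : X) :
    ‖mpow y ν • x‖ₑ ≤ ENNReal.ofReal (mpow ρ ν * ‖x‖) * ENNReal.ofReal (mpow ρ ν)⁻¹ := by
  have hρν := mpow_pos hρ ν
  rw [← ENNReal.ofReal_mul (by positivity), mul_right_comm, mul_inv_cancel₀ hρν.ne', one_mul,
    ← ofReal_norm, norm_smul]
  exact ENNReal.ofReal_le_ofReal (mul_le_of_le_one_left (norm_nonneg x) (norm_mpow_le_one hy ν))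

lemma Finsupp.card_Iic_single {ι : Type*} [DecidableEq ι] (i : ι) (n : ℕ) :
    (Finset.Iic (Finsupp.single i n)).card = n + 1 := by
  rw [Finsupp.card_Iic]
  rcases eq_or_ne n 0 with rfl | hn
  · simp
  · simp [Finsupp.support_single _ hn]

section LowerSets

variable {α β : Type*} [LinearOrder β] {a : α → β}

lemma exists_notMem_forall_le_of_finite_le [Infinite α] (ha : ∀ μ, {ν | a μ ≤ a ν}.Finite)
    (Λ : Finset α) : ∃ ν ∉ Λ, ∀ μ ∉ Λ, a μ ≤ a ν := by
  classical
  obtain ⟨μ₀, hμ₀⟩ := Infinite.exists_notMem_finset Λ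
  obtain ⟨ν, hνT, hνmax⟩ := ((ha μ₀).toFinset \ Λ).exists_max_image a
    ⟨μ₀, Finset.mem_sdiff.mpr ⟨(ha μ₀).mem_toFinset.mpr le_rfl, hμ₀⟩⟩
  obtain ⟨hμ₀ν, hνΛ⟩ := Finset.mem_sdiff.mp hνT
  refine ⟨ν, hνΛ, fun μ hμ => ?_⟩
  rcases le_total (a μ₀) (a μ) with h | h
  · exact hνmax μ (Finset.mem_sdiff.mpr ⟨(ha μ₀).mem_toFinset.mpr h, hμ⟩)
  · exact h.trans ((ha μ₀).mem_toFinset.mp hμ₀ν)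

/-- Greedily adding a maximiser of `a` keeps the set lower, because `a` decreases strictly
along the order. -/
theorem exists_isLowerSet_card_forall_le [PartialOrder α] [Infinite α] (ha : StrictAnti a)
    (hfin : ∀ μ, {ν | a μ ≤ a ν}.Finite) (n : ℕ) :
    ∃ Λ : Finset α, Λ.card = n ∧ IsLowerSet (Λ : Set α) ∧ ∀ μ ∉ Λ, ∀ ν ∈ Λ, a μ ≤ a ν := by
  classical
  induction n with
  | zero => exact ⟨∅, rfl, by simpa using isLowerSet_empty, by simp⟩
  | succ n ih =>
    obtain ⟨Λ, hcard, hlow, hdom⟩ := ih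
    obtain ⟨ν, hνΛ, hνmax⟩ := exists_notMem_forall_le_of_finite_le hfin Λ
    refine ⟨insert ν Λ, by rw [Finset.card_insert_of_notMem hνΛ, hcard], ?_, ?_⟩
    · intro κ μ hμκ hκ
      by_cases hμΛ : μ ∈ Λ
      · exact Finset.mem_insert_of_mem hμΛ
      rcases Finset.mem_insert.mp hκ with rfl | hκΛ
      · rcases hμκ.eq_or_lt with rfl | hlt
        · exact Finset.mem_insert_self _ _
        · exact absurd (hνmax μ hμΛ) (ha hlt).not_ge
      · exact absurd (hlow hμκ hκΛ) hμΛ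
    · intro μ hμ κ hκ
      have hμΛ : μ ∉ Λ := fun h => hμ (Finset.mem_insert_of_mem h)
      rcases Finset.mem_insert.mp hκ with rfl | hκΛ
      · exact hνmax μ hμΛ
      · exact hdom μ hμΛ κ hκΛ

end LowerSets

lemma zero_mem_of_isLowerSet {Λ : Finset MIdx} (hΛ : IsLowerSet (Λ : Set MIdx))
    (hne : Λ.Nonempty) : 0 ∈ Λ :=
  hΛ zero_le hne.choose_spec

/-- `μ` together with the elements of `Λ` other than `x₀` gives `#Λ` terms of the sum, each
at least `w μ`. -/
lemma card_mul_le_tsum_subtype_ne {α : Type*} [DecidableEq α] {w : α → ℝ≥0∞} {Λ : Finset α}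
    {x₀ μ : α} (hx₀ : x₀ ∈ Λ) (hμ : μ ∉ Λ) (hle : ∀ ν ∈ Λ, w μ ≤ w ν) :
    (Λ.card : ℝ≥0∞) * w μ ≤ ∑' ν : {ν : α // ν ≠ x₀}, w ν := by
  set s := insert μ (Λ.erase x₀)
  have hs : ∀ ν ∈ s, ν ≠ x₀ := by
    intro ν hν
    rcases Finset.mem_insert.mp hν with rfl | hν
    · exact fun h => hμ (h ▸ hx₀)
    · exact Finset.ne_of_mem_erase hν
  have hs_card : s.card = Λ.card := by
    rw [Finset.card_insert_of_notMem (fun h => hμ (Finset.mem_of_mem_erase h)),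
      Finset.card_erase_add_one hx₀]
  calc (Λ.card : ℝ≥0∞) * w μ = s.card • w μ := by rw [hs_card, nsmul_eq_mul]
    _ ≤ ∑ ν ∈ s, w ν := Finset.card_nsmul_le_sum _ _ _ fun ν hν => by
        rcases Finset.mem_insert.mp hν with rfl | hν
        · exact le_rfl
        · exact hle ν (Finset.mem_of_mem_erase hν)
    _ = ∑ ν ∈ s.subtype (· ≠ x₀), w ν := (Finset.sum_subtype_of_mem w hs).symm
    _ ≤ ∑' ν : {ν : α // ν ≠ x₀}, w ν := ENNReal.sum_le_tsum _

theorem exists_isLowerSet_card_rpow_le {ρ : ℕ → ℝ} (hρ : ∀ j, 1 < ρ j) {q : ℝ} (hq : 0 < q)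
    (n : ℕ) :
    ∃ Λ : Finset MIdx, Λ.card = n + 1 ∧ IsLowerSet (Λ : Set MIdx) ∧
      ∀ μ ∉ Λ, ENNReal.ofReal (mpow ρ μ)⁻¹ ^ q ≤
        (∑' ν : {ν : MIdx // ν ≠ 0}, ENNReal.ofReal (mpow ρ ν.1)⁻¹ ^ q) / (n + 1) := by
  classical
  set w : MIdx → ℝ≥0∞ := fun ν => ENNReal.ofReal (mpow ρ ν)⁻¹ ^ q
  set S := ∑' ν : {ν : MIdx // ν ≠ 0}, w ν
  have hρ0 : ∀ j, 0 < ρ j := fun j => one_pos.trans (hρ j)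
  by_cases hS : S = ⊤
  -- then the bound is vacuous and any lower set of the right size will do
  · refine ⟨Finset.Iic (Finsupp.single 0 n), Finsupp.card_Iic_single 0 n,
      by simpa using isLowerSet_Iic _, fun μ _ => ?_⟩
    rw [hS, ENNReal.top_div_of_ne_top (by simp)]
    exact le_top
  have hw_anti : StrictAnti w := fun μ ν hμν =>
    ENNReal.rpow_lt_rpow ((ENNReal.ofReal_lt_ofReal_iff (inv_pos.mpr (mpow_pos hρ0 μ))).mpr
      (inv_strictAnti₀ (mpow_pos hρ0 μ) (strictMono_mpow hρ hμν))) hq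
  have hw_ne : ∀ ν, w ν ≠ 0 := fun ν =>
    (ENNReal.rpow_pos (ENNReal.ofReal_pos.mpr (inv_pos.mpr (mpow_pos hρ0 ν)))
      ENNReal.ofReal_ne_top).ne'
  have hfin : ∀ μ, {ν | w μ ≤ w ν}.Finite := fun μ =>
    (((ENNReal.finite_const_le_of_tsum_ne_top hS (hw_ne μ)).image Subtype.val).insert 0).subset
      fun ν hν => (eq_or_ne ν 0).imp id fun h0 => ⟨⟨ν, h0⟩, hν, rfl⟩
  obtain ⟨Λ, hcard, hlow, hdom⟩ := exists_isLowerSet_card_forall_le hw_anti hfin (n + 1)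
  have h0Λ := zero_mem_of_isLowerSet hlow (Finset.card_pos.mp (by omega))
  refine ⟨Λ, hcard, hlow, fun μ hμ => ?_⟩
  rw [ENNReal.le_div_iff_mul_le (by simp) (by simp), mul_comm]
  exact_mod_cast hcard ▸ card_mul_le_tsum_subtype_ne h0Λ hμ (hdom μ hμ)

lemma enorm_tsum_sub_sum_le {ι E : Type*} [NormedAddCommGroup E] {f : ι → E} (hf : Summable f)
    (Λ : Finset ι) :
    ‖∑' i, f i - ∑ i ∈ Λ, f i‖ₑ ≤ ∑' i, (↑Λ : Set ι)ᶜ.indicator (fun i => ‖f i‖ₑ) i := by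
  rw [← hf.sum_add_tsum_compl, add_sub_cancel_left, ← tsum_subtype]
  exact enorm_tsum_le_tsum_enorm

lemma ofReal_norm_tsum_sub_sum_le {X : Type*} [NormedAddCommGroup X] [NormedSpace ℝ X]
    {ρ y : ℕ → ℝ} (hρ : ∀ j, 0 < ρ j) (hy : ∀ j, |y j| ≤ 1) {t : MIdx → X}
    (ht : Summable fun ν => mpow y ν • t ν) (Λ : Finset MIdx) :
    ENNReal.ofReal ‖∑' ν, mpow y ν • t ν - ∑ ν ∈ Λ, mpow y ν • t ν‖ ≤
      ∑' ν, ENNReal.ofReal (mpow ρ ν * ‖t ν‖) *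
        (↑Λ : Set MIdx)ᶜ.indicator (fun ν => ENNReal.ofReal (mpow ρ ν)⁻¹) ν := by
  rw [ofReal_norm]
  refine (enorm_tsum_sub_sum_le ht Λ).trans (ENNReal.tsum_le_tsum fun ν => ?_)
  rw [← Set.indicator_mul_right _ fun ν => ENNReal.ofReal (mpow ρ ν * ‖t ν‖)]
  exact Set.indicator_le_indicator (enorm_mpow_smul_le hρ hy ν (t ν))

lemma tsum_indicator_compl_rpow_le {Λ : Finset MIdx} (h0 : 0 ∈ Λ) (w : MIdx → ℝ≥0∞) {q : ℝ}
    (hq : 0 < q) :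
    ∑' ν, (↑Λ : Set MIdx)ᶜ.indicator w ν ^ q ≤ ∑' ν : {ν : MIdx // ν ≠ 0}, w ν ^ q := by
  calc ∑' ν, (↑Λ : Set MIdx)ᶜ.indicator w ν ^ q
      = ∑' ν, (↑Λ : Set MIdx)ᶜ.indicator (fun ν => w ν ^ q) ν := tsum_congr fun ν =>
        (congrFun (Set.indicator_comp_of_zero (g := (· ^ q)) (ENNReal.zero_rpow_of_pos hq)) ν).symm
    _ = ∑' ν : ↥(↑Λ : Set MIdx)ᶜ, w ν ^ q := (tsum_subtype _ _).symm
    _ ≤ ∑' ν : {ν : MIdx // ν ≠ 0}, w ν ^ q :=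
        ENNReal.tsum_mono_subtype (fun ν => w ν ^ q) (t := {ν | ν ≠ 0}) <| by
          rintro ν hν rfl; exact hν h0

namespace ENNReal

lemma tsum_mul_le_Lp_mul_Lq {ι : Type*} (f g : ι → ℝ≥0∞) {p q : ℝ} (hpq : p.HolderConjugate q) :
    ∑' i, f i * g i ≤ (∑' i, f i ^ p) ^ (1 / p) * (∑' i, g i ^ q) ^ (1 / q) := by
  rw [ENNReal.tsum_eq_iSup_sum]
  refine iSup_le fun s => (ENNReal.inner_le_Lp_mul_Lq s f g hpq).trans ?_
  gcongr
  exacts [hpq.one_div_nonneg, ENNReal.sum_le_tsum s, hpq.symm.one_div_nonneg,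
    ENNReal.sum_le_tsum s]

lemma rpow_le_mul_rpow_of_rpow_le {x D : ℝ≥0∞} {q s : ℝ} (hq : 0 < q) (hqs : q ≤ s)
    (hx : x ^ q ≤ D) : x ^ s ≤ D ^ ((s - q) / q) * x ^ q := by
  have hsq : 0 ≤ (s - q) / q := div_nonneg (sub_nonneg.mpr hqs) hq.le
  calc x ^ s = (x ^ q) ^ ((s - q) / q + 1) := by
        rw [← ENNReal.rpow_mul]; congr 1; field_simp; ring
    _ = (x ^ q) ^ ((s - q) / q) * x ^ q := by
        rw [ENNReal.rpow_add_of_nonneg _ _ hsq zero_le_one, ENNReal.rpow_one]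
    _ ≤ D ^ ((s - q) / q) * x ^ q := by gcongr

/-- Stechkin's estimate. -/
lemma tsum_rpow_le_of_rpow_le {ι : Type*} {a : ι → ℝ≥0∞} {q s : ℝ} {D S : ℝ≥0∞} (hq : 0 < q)
    (hqs : q ≤ s) (haD : ∀ i, a i ^ q ≤ D) (haS : ∑' i, a i ^ q ≤ S) :
    ∑' i, a i ^ s ≤ D ^ ((s - q) / q) * S :=
  calc ∑' i, a i ^ s ≤ ∑' i, D ^ ((s - q) / q) * a i ^ q :=
        ENNReal.tsum_le_tsum fun i => rpow_le_mul_rpow_of_rpow_le hq hqs (haD i)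
    _ = D ^ ((s - q) / q) * ∑' i, a i ^ q := ENNReal.tsum_mul_left
    _ ≤ D ^ ((s - q) / q) * S := by gcongr

lemma div_rpow_mul_rpow {x y : ℝ≥0∞} {r s : ℝ} (hr : 0 ≤ r) (hs : 0 ≤ s) :
    (x / y) ^ r * x ^ s = x ^ (r + s) * y ^ (-r) := by
  rw [ENNReal.div_rpow_of_nonneg _ _ hr, div_eq_mul_inv, ENNReal.rpow_neg, mul_right_comm,
    ENNReal.rpow_add_of_nonneg _ _ hr hs]

end ENNReal

lemma one_sub_one_div_toReal_nonneg {p : ℝ≥0∞} (hp : 1 ≤ p) : 0 ≤ 1 - 1 / p.toReal := by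
  rcases eq_or_ne p ⊤ with rfl | hp_top
  · simp
  · have : 1 ≤ p.toReal := by simpa using ENNReal.toReal_mono hp_top hp
    linarith [div_le_one_of_le₀ this (by linarith)]

lemma tsum_mul_le_lpF_top_mul {q : ℝ} (hq : 0 < q) (hq1 : q ≤ 1) (b : MIdx → ℝ)
    {a : MIdx → ℝ≥0∞} {D S : ℝ≥0∞} (haD : ∀ ν, a ν ^ q ≤ D) (haS : ∑' ν, a ν ^ q ≤ S) :
    ∑' ν, ENNReal.ofReal (b ν) * a ν ≤ lpF ⊤ b * (D ^ ((1 - q) / q) * S) := by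
  have hlpF : lpF ⊤ b = ⨆ ν, ENNReal.ofReal (b ν) := if_pos rfl
  calc ∑' ν, ENNReal.ofReal (b ν) * a ν ≤ ∑' ν, lpF ⊤ b * a ν :=
        ENNReal.tsum_le_tsum fun ν => by
          rw [hlpF]; gcongr; exact le_iSup (fun ν => ENNReal.ofReal (b ν)) ν
    _ = lpF ⊤ b * ∑' ν, a ν ^ (1 : ℝ) := by simp only [ENNReal.rpow_one, ENNReal.tsum_mul_left]
    _ ≤ lpF ⊤ b * (D ^ ((1 - q) / q) * S) := by
        gcongr; exact ENNReal.tsum_rpow_le_of_rpow_le hq hq1 haD haS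

/-- For `p = 1` the dual exponent is `∞`, and the uniform bound on `a` is used directly. -/
lemma tsum_mul_le_lpF_mul_of_ne_top {p : ℝ≥0∞} (hp : 1 ≤ p) (hp_top : p ≠ ⊤) {q : ℝ}
    (hq : 0 < q) (hr : 0 ≤ -1 + 1 / p.toReal + 1 / q) (b : MIdx → ℝ) {a : MIdx → ℝ≥0∞}
    {D S : ℝ≥0∞} (haD : ∀ ν, a ν ^ q ≤ D) (haS : ∑' ν, a ν ^ q ≤ S) :
    ∑' ν, ENNReal.ofReal (b ν) * a ν ≤
      lpF p b * D ^ (-1 + 1 / p.toReal + 1 / q) * S ^ (1 - 1 / p.toReal) := by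
  have hp_real : 1 ≤ p.toReal := by simpa using ENNReal.toReal_mono hp_top hp
  have hlpF : lpF p b = (∑' ν, ENNReal.ofReal (b ν) ^ p.toReal) ^ (1 / p.toReal) := if_neg hp_top
  rcases hp_real.eq_or_lt with hp1 | hp1
  · have ha : ∀ ν, a ν ≤ D ^ (1 / q) := fun ν => by
      rw [one_div]; exact (ENNReal.le_rpow_inv_iff hq).mpr (haD ν)
    calc ∑' ν, ENNReal.ofReal (b ν) * a ν ≤ ∑' ν, ENNReal.ofReal (b ν) * D ^ (1 / q) :=
          ENNReal.tsum_le_tsum fun ν => by gcongr; exact ha ν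
      _ = lpF p b * D ^ (1 / q) := by
          rw [ENNReal.tsum_mul_right, hlpF, ← hp1]; simp only [ENNReal.rpow_one, div_one]
      _ = _ := by rw [← hp1]; norm_num
  set s := p.toReal.conjExponent
  have hps : p.toReal.HolderConjugate s := .conjExponent hp1
  have h1s : 1 / s = 1 - 1 / p.toReal := by linarith [hps.one_div_add_one_div]
  have hqs : q ≤ s := (one_div_le_one_div hps.symm.pos hq).mp (by linarith)
  have hexp : (s - q) / q * (1 / s) = -1 + 1 / p.toReal + 1 / q := by
    have : (s - q) / q * (1 / s) = 1 / q - 1 / s := by field_simp [hps.symm.ne_zero, hq.ne']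
    linarith
  calc ∑' ν, ENNReal.ofReal (b ν) * a ν ≤ lpF p b * (∑' ν, a ν ^ s) ^ (1 / s) :=
        hlpF ▸ ENNReal.tsum_mul_le_Lp_mul_Lq _ _ hps
    _ ≤ lpF p b * (D ^ ((s - q) / q) * S) ^ (1 / s) := by
        gcongr
        exacts [hps.symm.one_div_nonneg, ENNReal.tsum_rpow_le_of_rpow_le hq hqs haD haS]
    _ = _ := by
        rw [ENNReal.mul_rpow_of_nonneg _ _ hps.symm.one_div_nonneg, ← ENNReal.rpow_mul, hexp,
          h1s, mul_assoc]

/-- Hölder's inequality `ℓ_p × ℓ_{p'}` combined with Stechkin's estimate for the `ℓ_{p'}` norm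
of `a`. -/
theorem tsum_mul_le_lpF_mul {p : ℝ≥0∞} (hp : 1 ≤ p) {q : ℝ} (hq : 0 < q)
    (hr : 0 ≤ -1 + 1 / p.toReal + 1 / q) (b : MIdx → ℝ) {a : MIdx → ℝ≥0∞} {D S : ℝ≥0∞}
    (haD : ∀ ν, a ν ^ q ≤ D) (haS : ∑' ν, a ν ^ q ≤ S) :
    ∑' ν, ENNReal.ofReal (b ν) * a ν ≤
      lpF p b * D ^ (-1 + 1 / p.toReal + 1 / q) * S ^ (1 - 1 / p.toReal) := by
  rcases eq_or_ne p ⊤ with rfl | hp_top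
  · rw [ENNReal.toReal_top, div_zero, add_zero] at hr ⊢
    have hq1 : q ≤ 1 := by
      rwa [le_neg_add_iff_add_le, add_zero, le_div_iff₀ hq, one_mul] at hr
    calc ∑' ν, ENNReal.ofReal (b ν) * a ν ≤ lpF ⊤ b * (D ^ ((1 - q) / q) * S) :=
          tsum_mul_le_lpF_top_mul hq hq1 b haD haS
      _ = _ := by
          rw [sub_zero, ENNReal.rpow_one, mul_assoc]
          congr 3; field_simp; ring
  · exact tsum_mul_le_lpF_mul_of_ne_top hp hp_top hq hr b haD haS

theorem global_taylor_error_general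
    {X : Type*} [NormedAddCommGroup X] [NormedSpace ℝ X] [CompleteSpace X]
    (p : ℝ≥0∞) (hp : 1 ≤ p)
    (q : ℝ) (hq : 0 < q)
    (r : ℝ) (hrdef : r = -1 + 1 / p.toReal + 1 / q) (hr : 0 < r)
    (ρ : ℕ → ℝ) (hρ : ∀ j, 1 < ρ j)
    (t : MIdx → X)
    (M : ℝ≥0∞) (hM : M = lpF p fun ν => mpow ρ ν * ‖t ν‖)
    (habs : ∀ y : ℕ → ℝ, (∀ j, |y j| ≤ 1) →
      Summable fun ν : MIdx => ‖mpow y ν • t ν‖)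
    (m : ℕ) :
    ∃ Λ : Finset MIdx, Λ.card = m + 1 ∧
      (∀ ν ∈ Λ, ∀ μ : MIdx, μ ≤ ν → μ ∈ Λ) ∧
      ∀ y : ℕ → ℝ, (∀ j, |y j| ≤ 1) →
        ENNReal.ofReal ‖(∑' ν : MIdx, mpow y ν • t ν) - ∑ ν ∈ Λ, mpow y ν • t ν‖ ≤
          M * (∑' ν : {ν : MIdx // ν ≠ 0}, ENNReal.ofReal ((mpow ρ ν.1)⁻¹) ^ q) ^ (1 / q) *
            ENNReal.ofReal (((m : ℝ) + 1) ^ (-r)) := by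
  obtain ⟨Λ, hcard, hlow, htail⟩ := exists_isLowerSet_card_rpow_le hρ hq m
  have h0 := zero_mem_of_isLowerSet hlow (Finset.card_pos.mp (by omega))
  refine ⟨Λ, hcard, fun ν hν μ hμ => hlow hμ hν, fun y hy => ?_⟩
  set S := ∑' ν : {ν : MIdx // ν ≠ 0}, ENNReal.ofReal (mpow ρ ν.1)⁻¹ ^ q
  set a := (↑Λ : Set MIdx)ᶜ.indicator fun ν => ENNReal.ofReal (mpow ρ ν)⁻¹
  have haD : ∀ ν, a ν ^ q ≤ S / (m + 1) := fun ν => by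
    by_cases hν : ν ∈ Λ
    · simp [a, hν, ENNReal.zero_rpow_of_pos hq]
    · simpa [a, hν] using htail ν hν
  calc ENNReal.ofReal ‖(∑' ν, mpow y ν • t ν) - ∑ ν ∈ Λ, mpow y ν • t ν‖
      ≤ ∑' ν, ENNReal.ofReal (mpow ρ ν * ‖t ν‖) * a ν :=
        ofReal_norm_tsum_sub_sum_le (fun j => one_pos.trans (hρ j)) hy (habs y hy).of_norm Λ
    _ ≤ M * (S / (m + 1)) ^ r * S ^ (1 - 1 / p.toReal) := by
        rw [hM, hrdef]
        exact tsum_mul_le_lpF_mul hp hq (hrdef ▸ hr.le) _ haD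
          (tsum_indicator_compl_rpow_le h0 _ hq)
    _ = M * S ^ (1 / q) * ENNReal.ofReal (((m : ℝ) + 1) ^ (-r)) := by
        rw [mul_assoc, ENNReal.div_rpow_mul_rpow hr.le (one_sub_one_div_toReal_nonneg hp),
          ← ENNReal.ofReal_rpow_of_pos (by positivity), mul_assoc]
        congr 3
        · rw [hrdef]; ring
        · rw [ENNReal.ofReal_add (by positivity) zero_le_one, ENNReal.ofReal_natCast,
            ENNReal.ofReal_one]

/-- Global Taylor approximation error estimate for an anisotropic analytic
function `u(y) = Σ_ν t_ν y^ν` in the class `B_{ρ,p}`: there is a lower set `Λ` of cardinality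
`m+1` such that the Taylor polynomial `P(y) = Σ_{ν∈Λ} t_ν y^ν` satisfies
`sup_{y∈Y} ‖u(y) − P(y)‖ ≤ M ‖(ρ^{-ν})_{ν≠0}‖_{ℓ_q} (m+1)^{-r}`, `r = -1 + 1/p + 1/q > 0`.
(The condition `0 < q < p'` is encoded by `0 < q` together with `0 < r`.) -/
theorem global_taylor_error
    {X : Type*} [NormedAddCommGroup X] [NormedSpace ℝ X] [CompleteSpace X]
    (p : ℝ≥0∞) (hp : 1 ≤ p)
    (q : ℝ) (hq : 0 < q)
    (r : ℝ) (hrdef : r = -1 + 1 / p.toReal + 1 / q) (hr : 0 < r)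
    (ρ : ℕ → ℝ) (hρ : ∀ j, 1 < ρ j)
    (hρq : Summable fun j => ((ρ j)⁻¹) ^ q)
    (t : MIdx → X)
    (M : ℝ≥0∞) (hM : M = lpF p fun ν => mpow ρ ν * ‖t ν‖) (hMfin : M ≠ ∞)
    (habs : ∀ y : ℕ → ℝ, (∀ j, |y j| ≤ 1) →
      Summable fun ν : MIdx => ‖mpow y ν • t ν‖)
    (m : ℕ) :
    ∃ Λ : Finset MIdx, Λ.card = m + 1 ∧
      (∀ ν ∈ Λ, ∀ μ : MIdx, μ ≤ ν → μ ∈ Λ) ∧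
      ∀ y : ℕ → ℝ, (∀ j, |y j| ≤ 1) →
        ENNReal.ofReal ‖(∑' ν : MIdx, mpow y ν • t ν) - ∑ ν ∈ Λ, mpow y ν • t ν‖ ≤
          M * (∑' ν : {ν : MIdx // ν ≠ 0}, ENNReal.ofReal ((mpow ρ ν.1)⁻¹) ^ q) ^ (1 / q) *
            ENNReal.ofReal (((m : ℝ) + 1) ^ (-r)) :=
  global_taylor_error_general p hp q hq r hrdef hr ρ hρ t M hM habs m
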